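/- Read's space ℛ = (c₀, |||·|||) is strictly convex, where |||x||| = ‖x‖_∞ + Σ_n r_n |⟨x, v_n⟩| with (v_n) dense in the unit sphere of ℓ₁ and r_n > 0 summable. -/

import Mathlib

open Filter Topology

/-- The sup norm of a real sequence. -/
noncomputable def supNorm (x : ℕ → ℝ) : ℝ := ⨆ k, |x k|

/-- The duality pairing `⟨x, v⟩ = ∑ₖ x k * v k`. -/
noncomputable def pairing (x v : ℕ → ℝ) : ℝ := ∑' k, x k * v k

/-- Read's norm `|||x||| = ‖x‖_∞ + ∑ₙ rₙ |⟨x, vₙ⟩|`. -/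
noncomputable def readNorm (r : ℕ → ℝ) (v : ℕ → ℕ → ℝ) (x : ℕ → ℝ) : ℝ :=
  supNorm x + ∑' n, r n * |pairing x (v n)|

/-!
If `|||x + y||| = |||x||| + |||y|||`, then, since every `rₙ` is positive, each triangle inequality
`|⟨x + y, vₙ⟩| ≤ |⟨x, vₙ⟩| + |⟨y, vₙ⟩|` is an equality, i.e. `⟨x, vₙ⟩ ⟨y, vₙ⟩ ≥ 0`. By density of
`(vₙ)` in the unit sphere of `ℓ₁` and homogeneity, `⟨x, w⟩ ⟨y, w⟩ ≥ 0` for every `w ∈ ℓ₁`. Testing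
this on `w = t eᵢ + eⱼ` shows `y = c x` with `c ≥ 0`, and `|||x||| = |||y||| = 1` forces `c = 1`.
-/

section Pairing

variable {x y w : ℕ → ℝ}

lemma abs_le_supNorm (hx : BddAbove (Set.range fun k => |x k|)) (k : ℕ) : |x k| ≤ supNorm x :=
  le_ciSup hx k

lemma supNorm_nonneg (hx : BddAbove (Set.range fun k => |x k|)) : 0 ≤ supNorm x :=
  (abs_nonneg _).trans (abs_le_supNorm hx 0)

lemma abs_add_apply_le_supNorm_add (hx : BddAbove (Set.range fun k => |x k|))
    (hy : BddAbove (Set.range fun k => |y k|)) (k : ℕ) :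
    |(x + y) k| ≤ supNorm x + supNorm y :=
  (abs_add_le (x k) (y k)).trans (add_le_add (abs_le_supNorm hx k) (abs_le_supNorm hy k))

lemma bddAbove_abs_add (hx : BddAbove (Set.range fun k => |x k|))
    (hy : BddAbove (Set.range fun k => |y k|)) : BddAbove (Set.range fun k => |(x + y) k|) :=
  ⟨_, Set.forall_mem_range.2 (abs_add_apply_le_supNorm_add hx hy)⟩

lemma supNorm_add_le (hx : BddAbove (Set.range fun k => |x k|))
    (hy : BddAbove (Set.range fun k => |y k|)) : supNorm (x + y) ≤ supNorm x + supNorm y :=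
  ciSup_le (abs_add_apply_le_supNorm_add hx hy)

lemma supNorm_smul_of_nonneg {c : ℝ} (hc : 0 ≤ c) (x : ℕ → ℝ) :
    supNorm (c • x) = c * supNorm x := by
  simp only [supNorm, Pi.smul_apply, smul_eq_mul, abs_mul, abs_of_nonneg hc]
  exact (Real.mul_iSup_of_nonneg hc _).symm

lemma norm_mul_le_supNorm_mul (hx : BddAbove (Set.range fun k => |x k|)) (w : ℕ → ℝ) (k : ℕ) :
    ‖x k * w k‖ ≤ supNorm x * |w k| := by
  rw [Real.norm_eq_abs, abs_mul]
  exact mul_le_mul_of_nonneg_right (abs_le_supNorm hx k) (abs_nonneg _)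

lemma summable_mul_of_bddAbove (hx : BddAbove (Set.range fun k => |x k|))
    (hw : Summable fun k => |w k|) : Summable fun k => x k * w k :=
  (hw.mul_left _).of_norm_bounded (norm_mul_le_supNorm_mul hx w)

lemma abs_pairing_le (hx : BddAbove (Set.range fun k => |x k|))
    (hw : Summable fun k => |w k|) : |pairing x w| ≤ supNorm x * ∑' k, |w k| :=
  tsum_of_norm_bounded (hw.hasSum.mul_left _) (norm_mul_le_supNorm_mul hx w)

lemma pairing_add_left (hx : BddAbove (Set.range fun k => |x k|))
    (hy : BddAbove (Set.range fun k => |y k|)) (hw : Summable fun k => |w k|) :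
    pairing (x + y) w = pairing x w + pairing y w := by
  simp only [pairing, Pi.add_apply, add_mul]
  exact (summable_mul_of_bddAbove hx hw).tsum_add (summable_mul_of_bddAbove hy hw)

lemma pairing_sub_right (hx : BddAbove (Set.range fun k => |x k|)) {u : ℕ → ℝ}
    (hu : Summable fun k => |u k|) (hw : Summable fun k => |w k|) :
    pairing x u - pairing x w = pairing x (u - w) := by
  simp only [pairing, Pi.sub_apply, mul_sub]
  exact ((summable_mul_of_bddAbove hx hu).tsum_sub (summable_mul_of_bddAbove hx hw)).symm

lemma pairing_smul_left (c : ℝ) (x w : ℕ → ℝ) : pairing (c • x) w = c * pairing x w := by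
  simp only [pairing, Pi.smul_apply, smul_eq_mul, mul_assoc, tsum_mul_left]

lemma pairing_smul_right (c : ℝ) (x w : ℕ → ℝ) : pairing x (c • w) = c * pairing x w := by
  simp only [pairing, Pi.smul_apply, smul_eq_mul, mul_left_comm _ c, tsum_mul_left]

lemma pairing_single_add_single (x : ℕ → ℝ) (i j : ℕ) (a b : ℝ) :
    pairing x (Pi.single i a + Pi.single j b) = x i * a + x j * b := by
  have hsingle (l : ℕ) (c : ℝ) : HasSum (fun k => x k * (Pi.single l c : ℕ → ℝ) k) (x l * c) := by
    simpa using hasSum_single (f := fun k => x k * (Pi.single l c : ℕ → ℝ) k) l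
      fun k hk => by simp [hk]
  simpa only [pairing, Pi.add_apply, mul_add] using ((hsingle i a).add (hsingle j b)).tsum_eq

lemma tendsto_pairing (hx : BddAbove (Set.range fun k => |x k|)) {u : ℕ → ℕ → ℝ}
    (hu : ∀ m, Summable fun k => |u m k|) (hw : Summable fun k => |w k|)
    (h : Tendsto (fun m => ∑' k, |w k - u m k|) atTop (𝓝 0)) :
    Tendsto (fun m => pairing x (u m)) atTop (𝓝 (pairing x w)) := by
  rw [tendsto_iff_dist_tendsto_zero]
  refine squeeze_zero (fun _ => dist_nonneg) (fun m => ?_) (by simpa using h.const_mul (supNorm x))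
  rw [Real.dist_eq, abs_sub_comm, pairing_sub_right hx hw (hu m)]
  exact abs_pairing_le hx <| (hw.add (hu m)).of_nonneg_of_le (fun _ => abs_nonneg _)
    fun k => abs_sub _ _

end Pairing

section Alignment

variable {x y : ℕ → ℝ}

lemma pairing_mul_nonneg_of_forall_tsum_abs_eq_one
    (h : ∀ w : ℕ → ℝ, (Summable fun k => |w k|) → ∑' k, |w k| = 1 →
      0 ≤ pairing x w * pairing y w)
    {w : ℕ → ℝ} (hw : Summable fun k => |w k|) : 0 ≤ pairing x w * pairing y w := by
  set t := ∑' k, |w k|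
  rcases (tsum_nonneg fun k => abs_nonneg (w k)).eq_or_lt with ht | ht
  · have hw0 : w = 0 := funext fun k => abs_eq_zero.1 <|
      le_antisymm (ht ▸ hw.le_tsum k fun _ _ => abs_nonneg _) (abs_nonneg _)
    simp [hw0, pairing]
  · have habs (k : ℕ) : |(t⁻¹ • w) k| = t⁻¹ * |w k| := by
      rw [Pi.smul_apply, smul_eq_mul, abs_mul, abs_of_pos (inv_pos.2 ht)]
    have hnorm := h (t⁻¹ • w) (by simpa only [habs] using hw.mul_left t⁻¹)
      (by simp only [habs, tsum_mul_left]; exact inv_mul_cancel₀ ht.ne')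
    rw [pairing_smul_right, pairing_smul_right, mul_mul_mul_comm] at hnorm
    exact nonneg_of_mul_nonneg_right hnorm (by positivity)

lemma pairing_mul_nonneg_of_dense (hx : BddAbove (Set.range fun k => |x k|))
    (hy : BddAbove (Set.range fun k => |y k|)) {v : ℕ → ℕ → ℝ}
    (hv : ∀ n, Summable fun k => |v n k|) (h : ∀ n, 0 ≤ pairing x (v n) * pairing y (v n))
    {w : ℕ → ℝ} (hw : Summable fun k => |w k|)
    (hdense : ∀ ε > 0, ∃ n, ∑' k, |w k - v n k| < ε) : 0 ≤ pairing x w * pairing y w := by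
  choose n hn using fun m : ℕ => hdense (1 / (m + 1)) Nat.one_div_pos_of_nat
  have hdist : Tendsto (fun m => ∑' k, |w k - v (n m) k|) atTop (𝓝 0) :=
    squeeze_zero (fun _ => tsum_nonneg fun _ => abs_nonneg _) (fun m => (hn m).le)
      tendsto_one_div_add_atTop_nhds_zero_nat
  exact ge_of_tendsto' ((tendsto_pairing hx (fun m => hv (n m)) hw hdist).mul
    (tendsto_pairing hy (fun m => hv (n m)) hw hdist)) fun m => h (n m)

lemma exists_nonneg_smul_eq_of_pairing_mul_nonneg (hx : x ≠ 0)
    (h : ∀ w : ℕ → ℝ, (Summable fun k => |w k|) → 0 ≤ pairing x w * pairing y w) :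
    ∃ c : ℝ, 0 ≤ c ∧ y = c • x := by
  obtain ⟨i, hi⟩ : ∃ i, x i ≠ 0 := Function.ne_iff.1 hx
  have hquad (j : ℕ) (t : ℝ) : 0 ≤ (x i * t + x j) * (y i * t + y j) := by
    set w : ℕ → ℝ := Pi.single i t + Pi.single j 1 with hw
    have hpos := h w ((hasSum_pi_single i t).add (hasSum_pi_single j 1)).summable.abs
    rwa [hw, pairing_single_add_single, pairing_single_add_single, mul_one, mul_one] at hpos
  refine ⟨y i / x i, ?_, funext fun j => ?_⟩
  · have hii := hquad i 0
    simp only [mul_zero, zero_add] at hii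
    rw [← mul_div_mul_left (y i) (x i) hi, ← sq]
    positivity
  · -- Along the line `t ↦ t - x j / x i` the first factor of `hquad j` is `x i * t`, so the
    -- quadratic in `t` has no constant term and its linear coefficient must vanish.
    have hdisc := discrim_le_zero (a := x i * y i) (b := x i * (y j - y i / x i * x j)) (c := 0)
      fun t => (hquad j (t - x j / x i)).trans_eq (by field_simp; ring)
    have hb : x i * (y j - y i / x i * x j) = 0 := by
      rw [discrim, mul_zero, sub_zero] at hdisc
      nlinarith [sq_nonneg (x i * (y j - y i / x i * x j))]
    simpa [sub_eq_zero, hi] using hb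

end Alignment

section ReadNorm

variable {r : ℕ → ℝ} {v : ℕ → ℕ → ℝ} {x y : ℕ → ℝ}

lemma readNorm_smul_of_nonneg {c : ℝ} (hc : 0 ≤ c) (r : ℕ → ℝ) (v : ℕ → ℕ → ℝ) (x : ℕ → ℝ) :
    readNorm r v (c • x) = c * readNorm r v x := by
  simp only [readNorm, supNorm_smul_of_nonneg hc, pairing_smul_left, abs_mul, abs_of_nonneg hc,
    mul_add, mul_left_comm (r _) c, tsum_mul_left]

lemma readNorm_zero (r : ℕ → ℝ) (v : ℕ → ℕ → ℝ) : readNorm r v 0 = 0 := by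
  simpa using readNorm_smul_of_nonneg le_rfl r v 0

lemma summable_mul_abs_pairing (hr : ∀ n, 0 ≤ r n) (hrs : Summable r)
    (hv : ∀ n, Summable fun k => |v n k|) (hv1 : ∀ n, ∑' k, |v n k| ≤ 1)
    (hx : BddAbove (Set.range fun k => |x k|)) :
    Summable fun n => r n * |pairing x (v n)| := by
  refine (hrs.mul_right (supNorm x)).of_nonneg_of_le (fun n => mul_nonneg (hr n) (abs_nonneg _))
    fun n => mul_le_mul_of_nonneg_left ?_ (hr n)
  exact (abs_pairing_le hx (hv n)).trans (mul_le_of_le_one_right (supNorm_nonneg hx) (hv1 n))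

lemma pairing_mul_nonneg_of_readNorm_add (hr : ∀ n, 0 < r n) (hrs : Summable r)
    (hv : ∀ n, Summable fun k => |v n k|) (hv1 : ∀ n, ∑' k, |v n k| ≤ 1)
    (hx : BddAbove (Set.range fun k => |x k|)) (hy : BddAbove (Set.range fun k => |y k|))
    (h : readNorm r v x + readNorm r v y ≤ readNorm r v (x + y)) (n : ℕ) :
    0 ≤ pairing x (v n) * pairing y (v n) := by
  have hr' (n : ℕ) := (hr n).le
  set f := fun n => r n * |pairing (x + y) (v n)|
  set g := fun n => r n * |pairing x (v n)| + r n * |pairing y (v n)|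
  have hfg : f ≤ g := fun n => by
    simp only [f, g, ← mul_add, pairing_add_left hx hy (hv n)]
    exact mul_le_mul_of_nonneg_left (abs_add_le _ _) (hr' n)
  have hsx := summable_mul_abs_pairing hr' hrs hv hv1 hx
  have hsy := summable_mul_abs_pairing hr' hrs hv hv1 hy
  have hgf : ∑' n, g n ≤ ∑' n, f n := by
    rw [hsx.tsum_add hsy]
    unfold readNorm at h
    linarith [supNorm_add_le hx hy]
  have hfgn : f n = g n := by
    by_contra hne
    exact (Summable.tsum_lt_tsum hfg ((hfg n).lt_of_ne hne)
      (summable_mul_abs_pairing hr' hrs hv hv1 (bddAbove_abs_add hx hy)) (hsx.add hsy)).not_ge hgf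
  have habs : |pairing x (v n) + pairing y (v n)| = |pairing x (v n)| + |pairing y (v n)| :=
    mul_left_cancel₀ (hr n).ne' <| by simpa only [f, g, mul_add, pairing_add_left hx hy (hv n)]
      using hfgn
  rcases (abs_add_eq_add_abs_iff _ _).1 habs with h | h
  exacts [mul_nonneg h.1 h.2, mul_nonneg_of_nonpos_of_nonpos h.1 h.2]

end ReadNorm

/-- Read's space `ℛ = (c₀, |||·|||)` is strictly convex, where `|||x||| = ‖x‖_∞ + ∑ₙ rₙ |⟨x, vₙ⟩|` with
`(vₙ)` dense in the unit sphere of `ℓ₁` and `rₙ > 0` summable: if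
`|||x||| = |||y||| = 1` and `x ≠ y`, then `|||x + y||| < 2`. -/
theorem read_space_strictly_convex
    (r : ℕ → ℝ) (hrpos : ∀ n, 0 < r n) (hrsum : Summable r)
    (v : ℕ → ℕ → ℝ) (hv1 : ∀ n, Summable fun k => |v n k|)
    (hv2 : ∀ n, ∑' k, |v n k| = 1)
    (hdense : ∀ w : ℕ → ℝ, (Summable fun k => |w k|) → ∑' k, |w k| = 1 →
      ∀ ε > 0, ∃ n, ∑' k, |w k - v n k| < ε)
    (x y : ℕ → ℝ) (hx : Tendsto x atTop (𝓝 0)) (hy : Tendsto y atTop (𝓝 0))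
    (hx1 : readNorm r v x = 1) (hy1 : readNorm r v y = 1) (hne : x ≠ y) :
    readNorm r v (x + y) < 2 := by
  have hxb := hx.abs.bddAbove_range
  have hyb := hy.abs.bddAbove_range
  by_contra! h2
  have hvn : ∀ n, 0 ≤ pairing x (v n) * pairing y (v n) :=
    pairing_mul_nonneg_of_readNorm_add hrpos hrsum hv1 (fun n => (hv2 n).le) hxb hyb
      (by linarith)
  have hw : ∀ w : ℕ → ℝ, (Summable fun k => |w k|) → 0 ≤ pairing x w * pairing y w :=
    fun _ => pairing_mul_nonneg_of_forall_tsum_abs_eq_one fun w hw hw1 =>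
      pairing_mul_nonneg_of_dense hxb hyb hv1 hvn hw (hdense w hw hw1)
  have hx0 : x ≠ 0 := by
    rintro rfl
    simp [readNorm_zero] at hx1
  obtain ⟨c, hc, rfl⟩ := exists_nonneg_smul_eq_of_pairing_mul_nonneg hx0 hw
  rw [readNorm_smul_of_nonneg hc, hx1, mul_one] at hy1
  exact hne (by rw [hy1, one_smul])
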